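/- arXiv:1805.07956 — 2 statements merged into one kernel-verified Lean document; each statement's English description precedes it below -/
import Mathlib

section
/- For any policy π and κ ∈ [0,1]: (I - ξ_κ D^π_κ P^π)^{-1} = κ I + (1-κ)(I - γP^π)^{-1}, where ξ_κ = γ(1-κ)/(1-γκ) and D^π_κ = (1-κγ)(I - κγP^π)^{-1}. -/
def IsStochastic {n : ℕ} (P : Matrix (Fin n) (Fin n) ℝ) : Prop :=
  (∀ i j, 0 ≤ P i j) ∧ ∀ i, ∑ j, P i j = 1

lemma isUnit_one_sub_smul_stochastic {n : ℕ} {P : Matrix (Fin n) (Fin n) ℝ}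
    (hP : IsStochastic P) {c : ℝ} (hc0 : 0 ≤ c) (hc1 : c < 1) :
    IsUnit (1 - c • P).det := by
  have hdet : (1 - c • P).det ≠ 0 := by
    apply det_ne_zero_of_sum_row_lt_diag
    intro k
    have hPk : ∀ j, 0 ≤ P k j := fun j => hP.1 k j
    have hsum : ∑ j, P k j = 1 := hP.2 k
    have hPkk1 : P k k ≤ 1 := by
      rw [← hsum]
      exact Finset.single_le_sum (fun j _ => hPk j) (Finset.mem_univ k)
    have h1 : ∑ j ∈ Finset.univ.erase k, ‖(1 - c • P : Matrix (Fin n) (Fin n) ℝ) k j‖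
        = c * (1 - P k k) := by
      have : ∀ j ∈ Finset.univ.erase k,
          ‖(1 - c • P : Matrix (Fin n) (Fin n) ℝ) k j‖ = c * P k j := by
        intro j hj
        have hjk : j ≠ k := Finset.ne_of_mem_erase hj
        rw [Matrix.sub_apply, Matrix.smul_apply, Matrix.one_apply_ne (Ne.symm hjk)]
        rw [zero_sub, norm_neg, smul_eq_mul, Real.norm_eq_abs,
          abs_of_nonneg (mul_nonneg hc0 (hPk j))]
      rw [Finset.sum_congr rfl this, ← Finset.mul_sum]
      congr 1
      have := Finset.sum_erase_add Finset.univ (fun j => P k j) (Finset.mem_univ k)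
      linarith
    have h2 : ‖(1 - c • P : Matrix (Fin n) (Fin n) ℝ) k k‖ = 1 - c * P k k := by
      have : (0:ℝ) ≤ 1 - c * P k k := by nlinarith [hPk k]
      simp [Matrix.sub_apply, Matrix.one_apply_eq, abs_of_nonneg this]
    rw [h1, h2]
    nlinarith [hPk k]
  exact isUnit_iff_ne_zero.mpr hdet

/-- `(I - ξ_κ D^π_κ P^π)⁻¹ = κ I + (1-κ)(I - γP^π)⁻¹`, where `ξ_κ = γ(1-κ)/(1-γκ)` and
`D^π_κ = (1-κγ)(I - κγP^π)⁻¹`. -/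
theorem stmt12 {n : ℕ} (γ κ : ℝ) (hγ : γ ∈ Set.Ioo (0:ℝ) 1) (hκ : κ ∈ Set.Icc (0:ℝ) 1)
    (P : Matrix (Fin n) (Fin n) ℝ) (hP : IsStochastic P) :
    let ξ : ℝ := γ * (1-κ) / (1 - γ*κ)
    let D : Matrix (Fin n) (Fin n) ℝ := (1 - κ*γ) • (1 - (κ*γ) • P)⁻¹
    (1 - ξ • (D * P))⁻¹
      = κ • (1 : Matrix (Fin n) (Fin n) ℝ) + (1-κ) • (1 - γ • P)⁻¹ := by
  intro ξ D
  obtain ⟨hγ0, hγ1⟩ := hγ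
  obtain ⟨hκ0, hκ1⟩ := hκ
  set A : Matrix (Fin n) (Fin n) ℝ := 1 - γ • P with hA
  set B : Matrix (Fin n) (Fin n) ℝ := 1 - (κ*γ) • P with hB
  have hκγ0 : 0 ≤ κ * γ := mul_nonneg hκ0 (le_of_lt hγ0)
  have hκγ1 : κ * γ < 1 := by nlinarith
  have hAunit : IsUnit A.det := isUnit_one_sub_smul_stochastic hP (le_of_lt hγ0) hγ1
  have hBunit : IsUnit B.det := isUnit_one_sub_smul_stochastic hP hκγ0 hκγ1
  have hne : (1 - γ*κ) ≠ 0 := by nlinarith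
  -- ξ * (1-κ*γ) = γ*(1-κ)
  have hξ : ξ * (1 - κ*γ) = γ * (1-κ) := by
    simp only [ξ]
    rw [show (1:ℝ) - κ*γ = 1 - γ*κ from by ring, div_mul_cancel₀ _ hne]
  have hM : 1 - ξ • (D * P) = B⁻¹ * A := by
    have h1 : ξ • (D * P) = (γ*(1-κ)) • (B⁻¹ * P) := by
      simp only [D, hB, Matrix.smul_mul, smul_smul, hξ]
    rw [h1]
    have h2 : (γ*(1-κ)) • P = B - A := by
      simp only [hA, hB]
      module
    have h3 : (γ*(1-κ)) • (B⁻¹ * P) = B⁻¹ * ((γ*(1-κ)) • P) := by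
      rw [Matrix.mul_smul]
    rw [h3, h2, Matrix.mul_sub, Matrix.nonsing_inv_mul B hBunit, Matrix.mul_sub]
    noncomm_ring
  rw [hM, Matrix.mul_inv_rev, Matrix.nonsing_inv_nonsing_inv B hBunit]
  have hBAA : B = κ • A + (1-κ) • 1 := by
    simp only [hA, hB, smul_sub, smul_smul]
    module
  rw [hBAA, Matrix.mul_add, Matrix.mul_smul, Matrix.mul_smul,
    Matrix.nonsing_inv_mul A hAunit, Matrix.mul_one]
end

section
/- (Monotonic decrease of the κ-concentrability coefficient at ν = μ) Let d^{π*}_{κ,ν} = (1-ξ_κ) ν (I - ξ_κ D^{π*}_κ P^{π*})^{-1} and let C^{π*}_κ(ν,ν) be the smallest constant C ≥ 1 with d^{π*}_{κ,ν} ≤ C·ν component-wise. Then for κ' > κ, C^{π*}_{κ'}(ν,ν) ≤ ((1-ξ_{κ'})/(1-κ))(κ'-κ + ((1-κ')/(1-ξ_κ)) C^{π*}_κ(ν,ν)), and this bound minus C^{π*}_κ(ν,ν) equals ((1-ξ_{κ'})/(1-κ))(κ'-κ)(1 - C^{π*}_κ(ν,ν)) ≤ 0; hence C^{π*}_κ(ν,ν)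 is nonincreasing in κ. -/
open Matrix in
lemma vecMul_smul_right {n : ℕ} (v : Fin n → ℝ) (c : ℝ) (M : Matrix (Fin n) (Fin n) ℝ) :
    v ᵥ* (c • M) = c • (v ᵥ* M) := by
  ext i
  simp [Matrix.vecMul, dotProduct, Finset.mul_sum]
  exact Finset.sum_congr rfl fun j _ => by ring

open Matrix in
lemma isUnit_one_sub_smul {n : ℕ} (c : ℝ) (hc0 : 0 ≤ c) (hc1 : c < 1)
    (P : Matrix (Fin n) (Fin n) ℝ) (hP : IsStochastic P) :
    IsUnit (1 - c • P) := by
  rw [← Matrix.mulVec_injective_iff_isUnit]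
  have hker : ∀ x : Fin n → ℝ, (1 - c • P).mulVec x = 0 → x = 0 := by
    intro x hx
    rcases Nat.eq_zero_or_pos n with hn | hn
    · funext i; exact absurd i.2 (by omega)
    have : Nonempty (Fin n) := ⟨⟨0, hn⟩⟩
    obtain ⟨i, -, hi⟩ := Finset.exists_max_image Finset.univ (fun i => |x i|)
      Finset.univ_nonempty
    have hxi : ∀ j, x j = c * ∑ k, P j k * x k := by
      intro j
      have h0 : (1 - c • P).mulVec x = x - c • (P.mulVec x) := by
        rw [Matrix.sub_mulVec, Matrix.one_mulVec, Matrix.smul_mulVec]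
      rw [h0] at hx
      have := congr_fun (sub_eq_zero.mp hx) j
      rw [this]
      simp [Matrix.mulVec, dotProduct]
    have key : |x i| ≤ c * |x i| := by
      calc |x i| = |c * ∑ k, P i k * x k| := by rw [← hxi i]
        _ = c * |∑ k, P i k * x k| := by rw [abs_mul, abs_of_nonneg hc0]
        _ ≤ c * ∑ k, |P i k * x k| := by
            gcongr; exact Finset.abs_sum_le_sum_abs _ _
        _ ≤ c * ∑ k, P i k * |x i| := by
            gcongr with k
            rw [abs_mul, abs_of_nonneg (hP.1 i k)]
            exact mul_le_mul_of_nonneg_left (hi k (Finset.mem_univ k)) (hP.1 i k)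
        _ = c * |x i| := by rw [← Finset.sum_mul, hP.2 i, one_mul]
    have hxi0 : |x i| = 0 := by nlinarith [abs_nonneg (x i)]
    funext j
    have := hi j (Finset.mem_univ j)
    have : |x j| ≤ 0 := hxi0 ▸ this
    simpa using le_antisymm this (abs_nonneg _)
  intro x y hxy
  have : (1 - c • P).mulVec (x - y) = 0 := by
    rw [Matrix.mulVec_sub, hxy, sub_self]
  have := hker _ this
  funext j
  have := congr_fun this j
  simpa [sub_eq_zero] using this

open Matrix in
lemma inv_form {n : ℕ} (γ k : ℝ) (hγ : γ ∈ Set.Ioo (0:ℝ) 1) (hk : k ∈ Set.Ico (0:ℝ) 1)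
    (P : Matrix (Fin n) (Fin n) ℝ) (hP : IsStochastic P) :
    (1 - (γ * (1-k) / (1 - γ*k)) • ((1 - k*γ) • (1 - (k*γ) • P)⁻¹ * P))⁻¹
      = (1 - γ • P)⁻¹ * (1 - (k*γ) • P) := by
  obtain ⟨hγ0, hγ1⟩ := hγ
  obtain ⟨hk0, hk1⟩ := hk
  have hkγ0 : 0 ≤ k * γ := mul_nonneg hk0 hγ0.le
  have hkγ1 : k * γ < 1 := by nlinarith
  have hne : (1 : ℝ) - γ * k ≠ 0 := by nlinarith
  have hA : IsUnit (1 - γ • P) := isUnit_one_sub_smul γ hγ0.le hγ1 P hP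
  have hB : IsUnit (1 - (k*γ) • P) := isUnit_one_sub_smul (k*γ) hkγ0 hkγ1 P hP
  set A : Matrix (Fin n) (Fin n) ℝ := 1 - γ • P with hAdef
  set B : Matrix (Fin n) (Fin n) ℝ := 1 - (k*γ) • P with hBdef
  have hBdet : IsUnit B.det := (Matrix.isUnit_iff_isUnit_det B).mp hB
  have hAdet : IsUnit A.det := (Matrix.isUnit_iff_isUnit_det A).mp hA
  have hAB : A = B - (γ * (1-k)) • P := by
    rw [hAdef, hBdef]
    have : (k*γ) • P + (γ * (1-k)) • P = γ • P := by
      rw [← add_smul]; ring_nf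
    rw [← this]; abel
  have hξ : (γ * (1-k) / (1 - γ*k)) * (1 - k*γ) = γ * (1-k) := by
    have h : (1:ℝ) - k*γ = 1 - γ*k := by ring
    rw [h, div_mul_cancel₀ _ hne]
  have step1 : 1 - (γ * (1-k) / (1 - γ*k)) • ((1 - k*γ) • B⁻¹ * P) = B⁻¹ * A := by
    rw [hAB, Matrix.mul_sub, Matrix.nonsing_inv_mul B hBdet, mul_smul_comm,
      smul_mul_assoc, smul_smul, hξ]
  rw [step1, Matrix.mul_inv_rev, Matrix.nonsing_inv_nonsing_inv B hBdet]


/-- Monotonic decrease of the κ-concentrability coefficient at `μ = ν`: with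
`d_κ = (1-ξ_κ) ν (I - ξ_κ D^{π*}_κ P^{π*})⁻¹` and `C_κ` the smallest constant `C ≥ 1` with
`d_κ ≤ C ν`, for `κ' > κ` we have
`C_{κ'} ≤ ((1-ξ_{κ'})/(1-κ))(κ'-κ + ((1-κ')/(1-ξ_κ)) C_κ)`, the bound minus `C_κ` equals
`((1-ξ_{κ'})/(1-κ))(κ'-κ)(1 - C_κ) ≤ 0`, hence `C_{κ'} ≤ C_κ`. -/
theorem stmt18 {n : ℕ} (γ κ κ' : ℝ) (hγ : γ ∈ Set.Ioo (0:ℝ) 1)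
    (hκ : κ ∈ Set.Ico (0:ℝ) 1) (hκ' : κ' ∈ Set.Ico (0:ℝ) 1) (hlt : κ < κ')
    (P : Matrix (Fin n) (Fin n) ℝ) (hP : IsStochastic P)
    (ν : Fin n → ℝ) (hν : (∀ s, 0 < ν s) ∧ ∑ s, ν s = 1)
    (Cκ Cκ' : ℝ) :
    let ξ : ℝ → ℝ := fun k => γ * (1-k) / (1 - γ*k)
    let D : ℝ → Matrix (Fin n) (Fin n) ℝ := fun k => (1 - k*γ) • (1 - (k*γ) • P)⁻¹
    let d : ℝ → Fin n → ℝ := fun k => (1 - ξ k) • Matrix.vecMul ν (1 - ξ k • (D k * P))⁻¹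
    IsLeast {C : ℝ | 1 ≤ C ∧ ∀ s, d κ s ≤ C * ν s} Cκ →
    IsLeast {C : ℝ | 1 ≤ C ∧ ∀ s, d κ' s ≤ C * ν s} Cκ' →
      Cκ' ≤ ((1 - ξ κ')/(1-κ)) * (κ' - κ + ((1-κ')/(1 - ξ κ)) * Cκ) ∧
      ((1 - ξ κ')/(1-κ)) * (κ' - κ + ((1-κ')/(1 - ξ κ)) * Cκ) - Cκ
        = ((1 - ξ κ')/(1-κ)) * (κ' - κ) * (1 - Cκ) ∧
      Cκ' ≤ Cκ := by
  intro ξ D d hC hC'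
  obtain ⟨hγ0, hγ1⟩ := hγ
  obtain ⟨hκ0, hκ1⟩ := hκ
  obtain ⟨hκ'0, hκ'1⟩ := hκ'
  have hgκ : (0:ℝ) < 1 - γ*κ := by nlinarith
  have hgκ' : (0:ℝ) < 1 - γ*κ' := by nlinarith
  have hκ1' : (0:ℝ) < 1 - κ := by linarith
  have hγne : (1:ℝ) - γ ≠ 0 := by linarith
  -- closed forms of 1 - ξ
  have e : 1 - ξ κ = (1-γ)/(1-γ*κ) := by
    show 1 - γ * (1-κ) / (1 - γ*κ) = (1-γ)/(1-γ*κ)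
    field_simp
    ring
  have e' : 1 - ξ κ' = (1-γ)/(1-γ*κ') := by
    show 1 - γ * (1-κ') / (1 - γ*κ') = (1-γ)/(1-γ*κ')
    field_simp
    ring
  have hξκpos : 0 < 1 - ξ κ := by rw [e]; exact div_pos (by linarith) hgκ
  have hξκ'pos : 0 < 1 - ξ κ' := by rw [e']; exact div_pos (by linarith) hgκ'
  -- part 2: pure algebra
  have part2 : ((1 - ξ κ')/(1-κ)) * (κ' - κ + ((1-κ')/(1 - ξ κ)) * Cκ) - Cκ
      = ((1 - ξ κ')/(1-κ)) * (κ' - κ) * (1 - Cκ) := by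
    rw [e, e']
    field_simp
    ring
  -- the matrix identity
  set A : Matrix (Fin n) (Fin n) ℝ := 1 - γ • P with hAdef
  set B : ℝ → Matrix (Fin n) (Fin n) ℝ := fun k => 1 - (k*γ) • P with hBdef
  have hA : IsUnit A := isUnit_one_sub_smul γ hγ0.le hγ1 P hP
  have hAdet : IsUnit A.det := (Matrix.isUnit_iff_isUnit_det A).mp hA
  have hinv : ∀ k, k ∈ Set.Ico (0:ℝ) 1 →
      (1 - ξ k • (D k * P))⁻¹ = A⁻¹ * B k := fun k hk =>
    inv_form γ k ⟨hγ0, hγ1⟩ hk P hP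
  set a : ℝ := (κ' - κ)/(1-κ) with hadef
  set b : ℝ := (1-κ')/(1-κ) with hbdef
  have ha0 : 0 ≤ a := div_nonneg (by linarith) (by linarith)
  have hb0 : 0 ≤ b := div_nonneg (by linarith) (by linarith)
  have hcombB : B κ' = a • A + b • B κ := by
    ext i j
    simp only [hBdef, hAdef, Matrix.sub_apply, Matrix.smul_apply, Matrix.add_apply,
      smul_eq_mul]
    rw [hadef, hbdef]
    field_simp
    ring
  have hcomb : A⁻¹ * B κ' = a • (1 : Matrix (Fin n) (Fin n) ℝ) + b • (A⁻¹ * B κ) := by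
    rw [hcombB, Matrix.mul_add, mul_smul_comm, mul_smul_comm,
      Matrix.nonsing_inv_mul A hAdet]
  -- componentwise formula for d κ'
  have hd' : ∀ s, d κ' s
      = (1 - ξ κ') * (a * ν s + b * (Matrix.vecMul ν (A⁻¹ * B κ)) s) := by
    intro s
    show (1 - ξ κ') * (Matrix.vecMul ν (1 - ξ κ' • (D κ' * P))⁻¹) s = _
    rw [hinv κ' ⟨hκ'0, hκ'1⟩, hcomb, Matrix.vecMul_add, vecMul_smul_right,
      vecMul_smul_right, Matrix.vecMul_one]
    simp [smul_eq_mul]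
  have hdκ : ∀ s, (Matrix.vecMul ν (A⁻¹ * B κ)) s = d κ s / (1 - ξ κ) := by
    intro s
    have : d κ s = (1 - ξ κ) * (Matrix.vecMul ν (A⁻¹ * B κ)) s := by
      show (1 - ξ κ) * (Matrix.vecMul ν (1 - ξ κ • (D κ * P))⁻¹) s = _
      rw [hinv κ ⟨hκ0, hκ1⟩]
    rw [this]
    field_simp
  -- the bound is in the set for κ'
  set bound : ℝ := ((1 - ξ κ')/(1-κ)) * (κ' - κ + ((1-κ')/(1 - ξ κ)) * Cκ) with hbound
  have hCκ1 : 1 ≤ Cκ := hC.1.1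
  have ht : 0 ≤ ((1 - ξ κ')/(1-κ)) * (κ' - κ) := mul_nonneg (div_nonneg hξκ'pos.le hκ1'.le) (by linarith)
  have ht1 : ((1 - ξ κ')/(1-κ)) * (κ' - κ) < 1 := by
    rw [e', div_div, div_mul_eq_mul_div, div_lt_one (by positivity)]
    nlinarith [mul_pos (show (0:ℝ) < 1 - κ' by linarith) hgκ]
  have hbound1 : 1 ≤ bound := by
    have heq : bound = Cκ + ((1 - ξ κ')/(1-κ)) * (κ' - κ) * (1 - Cκ) := by
      have := part2; linarith
    have hexp : Cκ + ((1 - ξ κ')/(1-κ)) * (κ' - κ) * (1 - Cκ) - 1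
        = (Cκ - 1) * (1 - ((1 - ξ κ')/(1-κ)) * (κ' - κ)) := by ring
    have h4 : 0 ≤ (Cκ - 1) * (1 - ((1 - ξ κ')/(1-κ)) * (κ' - κ)) :=
      mul_nonneg (by linarith) (by linarith)
    linarith
  have hboundle : ∀ s, d κ' s ≤ bound * ν s := by
    intro s
    have hdle : d κ s ≤ Cκ * ν s := hC.1.2 s
    rw [hd' s, hdκ s, hbound]
    have h1 : (1 - ξ κ') * (a * ν s + b * (d κ s / (1 - ξ κ)))
        ≤ (1 - ξ κ') * (a * ν s + b * ((Cκ * ν s) / (1 - ξ κ))) := by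
      gcongr
    refine h1.trans (le_of_eq ?_)
    rw [hadef, hbdef]
    field_simp
    try ring
  have hmem : bound ∈ {C : ℝ | 1 ≤ C ∧ ∀ s, d κ' s ≤ C * ν s} := ⟨hbound1, hboundle⟩
  have part1 : Cκ' ≤ bound := hC'.2 hmem
  refine ⟨part1, part2, ?_⟩
  have h2 : bound - Cκ = ((1 - ξ κ')/(1-κ)) * (κ' - κ) * (1 - Cκ) := part2
  have h3 : ((1 - ξ κ')/(1-κ)) * (κ' - κ) * (1 - Cκ) ≤ 0 :=
    mul_nonpos_of_nonneg_of_nonpos ht (by linarith)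
  linarith
end
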